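/- In the quiver setting with N distinct loops l₁, …, l_N at the vertex v₀, set x_j = L_{l_j} + L_{l_j}* and T = Σ_{j=1}^{N} x_j. Then for every natural number n, ⟨T^n ξ_{v₀}, ξ_{v₀}⟩ = catalan(n/2) · N^{n/2} if n is even, and ⟨T^n ξ_{v₀}, ξ_{v₀}⟩ = 0 if n is odd, where catalan(k) is the k-th Catalan number. -/

import Mathlib

/-!
Put `P = Σ_j L_{l_j}`, so that `T = P + P*`, and `f_k = P^k ξ_{v₀}`. Distinct loops give the
`L_{l_j}` orthogonal ranges, and each is isometric on paths ending at `v₀`; hence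
`P* ξ_{v₀} = 0` and `P* P = N` on the `f_k`. So `T f_k = f_{k+1} + N f_{k-1}`, and
`⟨f_k, ξ_{v₀}⟩ = ⟨f_{k-1}, P* ξ_{v₀}⟩ = 0` for `k ≥ 1`; hence the moment `⟨T^n ξ_{v₀}, ξ_{v₀}⟩`
counts Dyck paths of length `n` with every down step weighted by `N`. The reflection principle
evaluates this to `catalan (n/2) * N^(n/2)`.
-/

noncomputable section

/-- The type of all finite directed paths of a quiver, including length-zero paths. -/
abbrev QuiverPaths (V : Type) [Quiver.{1} V] : Type 1 := Σ a b : V, Quiver.Path a b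

/-- The Hilbert space `ℓ²` indexed by the paths of a quiver. -/
abbrev QH (V : Type) [Quiver.{1} V] : Type 1 := lp (fun _ : QuiverPaths V => ℂ) 2

/-- The orthonormal basis vector `ξ_q` at the path `q`. -/
noncomputable def xi (V : Type) [Quiver.{1} V] {a b : V} (q : Quiver.Path a b) : QH V :=
  letI : DecidableEq (QuiverPaths V) := Classical.decEq _
  lp.single 2 ⟨a, b, q⟩ 1

/-- Walks on `ℕ` with steps `±1` from `k` to `0` in `n` steps, each down step weighted by `N`. -/
def weightedWalkCount (N : ℕ) : ℕ → ℕ → ℕ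
  | 0, 0 => 1
  | 0, _ + 1 => 0
  | n + 1, 0 => weightedWalkCount N n 1
  | n + 1, k + 1 => weightedWalkCount N n (k + 2) + N * weightedWalkCount N n k

theorem catalan_eq_choose_sub_choose (m : ℕ) :
    (catalan m : ℤ) = ((2 * m).choose m : ℤ) - ((2 * m).choose (m + 1) : ℤ) := by
  have hcat : ((m + 1) * catalan m : ℤ) = (2 * m).choose m := by
    exact_mod_cast succ_mul_catalan_eq_centralBinom m
  have hsucc : ((2 * m).choose (m + 1) * (m + 1) : ℤ) = (2 * m).choose m * m := by
    have := Nat.choose_succ_right_eq (2 * m) m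
    rw [show 2 * m - m = m by omega] at this
    exact_mod_cast this
  have hm : (m + 1 : ℤ) ≠ 0 := by positivity
  apply mul_left_cancel₀ hm
  linear_combination hcat + hsucc

namespace weightedWalkCount

theorem eq_zero_of_lt {N n k : ℕ} (h : n < k) : weightedWalkCount N n k = 0 := by
  induction n generalizing k with
  | zero => obtain ⟨k, rfl⟩ := Nat.exists_eq_add_one.mpr h; rfl
  | succ n ih =>
    obtain ⟨k, rfl⟩ := Nat.exists_eq_add_one.mpr (Nat.zero_lt_of_lt h)
    simp only [weightedWalkCount, ih (k := k + 2) (by omega), ih (k := k) (by omega), mul_zero,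
      add_zero]

theorem eq_zero_of_mod_two_ne {N n k : ℕ} (h : n % 2 ≠ k % 2) : weightedWalkCount N n k = 0 := by
  induction n generalizing k with
  | zero =>
    cases k with
    | zero => omega
    | succ k => rfl
  | succ n ih =>
    cases k with
    | zero => exact ih (by omega)
    | succ k =>
      simp only [weightedWalkCount, ih (k := k + 2) (by omega), ih (k := k) (by omega), mul_zero,
        add_zero]

/-- Reflection principle: the walks from `k` to `0` that pass through `-1` correspond to the
walks from `-k - 2` to `0`. -/
theorem cast_eq_choose_sub_choose (N e k : ℕ) :
    (weightedWalkCount N (2 * e + k) k : ℤ) =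
      (N : ℤ) ^ (e + k) * (((2 * e + k).choose e : ℤ) - ((2 * e + k).choose (e + k + 1) : ℤ)) := by
  induction h : 2 * e + k generalizing e k with
  | zero =>
    obtain ⟨rfl, rfl⟩ : e = 0 ∧ k = 0 := by omega
    simp [weightedWalkCount]
  | succ n ih =>
    cases k with
    | zero =>
      obtain ⟨e, rfl⟩ : ∃ e', e = e' + 1 := ⟨e - 1, by omega⟩
      rw [weightedWalkCount, ih e 1 (by omega), Nat.choose_succ_succ' n e,
        Nat.choose_succ_succ' n (e + 1)]
      push_cast
      ring_nf
    | succ k =>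
      rw [weightedWalkCount, Nat.cast_add, Nat.cast_mul, ih e k (by omega)]
      cases e with
      | zero =>
        rw [eq_zero_of_lt (by omega)]
        simp [show n = k by omega, pow_succ']
      | succ e =>
        rw [ih e (k + 2) (by omega), Nat.choose_succ_succ' n e,
          Nat.choose_succ_succ' n (e + 1 + (k + 1))]
        push_cast
        ring_nf

theorem eq_catalan (N n : ℕ) :
    weightedWalkCount N n 0 = if n % 2 = 0 then catalan (n / 2) * N ^ (n / 2) else 0 := by
  split_ifs with hn
  · obtain ⟨m, rfl⟩ : ∃ m, n = 2 * m + 0 := ⟨n / 2, by omega⟩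
    have := cast_eq_choose_sub_choose N m 0
    simp only [add_zero, ← catalan_eq_choose_sub_choose] at this
    rw [add_zero, Nat.mul_div_cancel_left m two_pos]
    exact_mod_cast this.trans (mul_comm _ _)
  · exact eq_zero_of_mod_two_ne (by omega)

end weightedWalkCount

theorem map_pow_smul_eq_weightedWalkCount_smul {M E A : Type*} [Monoid M] [AddCommMonoid E]
    [DistribMulAction M E] [AddCommMonoid A] (φ : E →+ A) (T : M) (f : ℕ → E) (N : ℕ)
    (h0 : T • f 0 = f 1) (hsucc : ∀ k, T • f (k + 1) = f (k + 2) + N • f k)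
    (hφ : ∀ k, φ (f (k + 1)) = 0) (n k : ℕ) :
    φ (T ^ n • f k) = weightedWalkCount N n k • φ (f 0) := by
  induction n generalizing k with
  | zero => cases k <;> simp [weightedWalkCount, hφ]
  | succ n ih =>
    rw [pow_succ, mul_smul]
    cases k with
    | zero => rw [h0, ih]; rfl
    | succ k =>
      rw [hsucc, smul_add, smul_comm, map_add, map_nsmul, ih, ih, weightedWalkCount, add_smul,
        mul_smul]

open ContinuousLinearMap in
theorem inner_pow_add_adjoint_apply_self {𝕜 E : Type*} [RCLike 𝕜] [NormedAddCommGroup E]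
    [InnerProductSpace 𝕜 E] [CompleteSpace E] (P : E →L[𝕜] E) (ξ : E) (N : ℕ)
    (hξ : adjoint P ξ = 0) (hP : ∀ k, adjoint P (P ((P ^ k) ξ)) = N • (P ^ k) ξ) (n : ℕ) :
    inner 𝕜 (((P + adjoint P) ^ n) ξ) ξ = weightedWalkCount N n 0 * inner 𝕜 ξ ξ := by
  have hpow : ∀ k, (P ^ (k + 1)) ξ = P ((P ^ k) ξ) := fun k => by rw [pow_succ']; rfl
  have := map_pow_smul_eq_weightedWalkCount_smul
    (AddMonoidHom.mk' (fun x => inner 𝕜 x ξ) (fun x y => inner_add_left x y ξ))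
    (P + adjoint P) (fun k => (P ^ k) ξ) N ?_ ?_ ?_ n 0
  · simpa [ContinuousLinearMap.smul_def, nsmul_eq_mul] using this
  · simp [ContinuousLinearMap.smul_def, hξ]
  · intro k
    simp only [ContinuousLinearMap.smul_def, add_apply, hpow, hP]
  · intro k
    simp [hpow, ← adjoint_inner_right, hξ]

section

variable {V : Type} [Quiver.{1} V]

theorem inner_xi_left {a b : V} (q : Quiver.Path a b) (x : QH V) :
    inner ℂ (xi V q) x = x ⟨a, b, q⟩ := by
  let _ : DecidableEq (QuiverPaths V) := Classical.decEq _
  simp [xi, lp.inner_single_left]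

theorem inner_xi_self {a b : V} (q : Quiver.Path a b) : inner ℂ (xi V q) (xi V q) = 1 := by
  let _ : DecidableEq (QuiverPaths V) := Classical.decEq _
  rw [inner_xi_left, xi, lp.single_apply_self]

theorem inner_xi_xi_of_ne {a b c d : V} {q : Quiver.Path a b} {r : Quiver.Path c d}
    (h : (⟨a, b, q⟩ : QuiverPaths V) ≠ ⟨c, d, r⟩) : inner ℂ (xi V q) (xi V r) = 0 := by
  let _ : DecidableEq (QuiverPaths V) := Classical.decEq _
  rw [inner_xi_left, xi, lp.single_apply_ne _ _ _ h]

theorem inner_xi_cons_xi_cons {a b c c' : V} (q : Quiver.Path c a) (q' : Quiver.Path c' a)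
    (e : a ⟶ b) : inner ℂ (xi V (q.cons e)) (xi V (q'.cons e)) = inner ℂ (xi V q) (xi V q') := by
  by_cases h : (⟨c, a, q⟩ : QuiverPaths V) = ⟨c', a, q'⟩
  · cases h
    rw [inner_xi_self, inner_xi_self]
  · rw [inner_xi_xi_of_ne h, inner_xi_xi_of_ne fun h' => h (by cases h'; rfl)]

theorem inner_xi_cons_xi_cons_of_ne {a b c c' : V} (q : Quiver.Path c a) (q' : Quiver.Path c' a)
    {e e' : a ⟶ b} (he : e ≠ e') : inner ℂ (xi V (q.cons e)) (xi V (q'.cons e')) = 0 :=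
  inner_xi_xi_of_ne fun h => he (by cases h; rfl)

theorem ext_inner_xi {x y : QH V}
    (h : ∀ (a b : V) (q : Quiver.Path a b), inner ℂ (xi V q) x = inner ℂ (xi V q) y) : x = y := by
  ext ⟨a, b, q⟩
  simpa [inner_xi_left] using h a b q

end

def IsCreationOperator {V : Type} [Quiver.{1} V] {a b : V} (e : a ⟶ b) (L : QH V →L[ℂ] QH V) :
    Prop :=
  (∀ (c : V) (q : Quiver.Path c a), L (xi V q) = xi V (q.cons e)) ∧
    ∀ (c d : V) (q : Quiver.Path c d), d ≠ a → L (xi V q) = 0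

namespace IsCreationOperator

open ContinuousLinearMap

variable {V : Type} [Quiver.{1} V] {a b : V} {e : a ⟶ b} {L : QH V →L[ℂ] QH V}

theorem inner_xi_adjoint_apply (hL : IsCreationOperator e L) {c d : V} (q : Quiver.Path c d)
    (hd : d ≠ a) (x : QH V) : inner ℂ (xi V q) (adjoint L x) = 0 := by
  rw [adjoint_inner_right, hL.2 c d q hd, inner_zero_left]

theorem adjoint_apply_xi_nil (hL : IsCreationOperator e L) (v : V) :
    adjoint L (xi V (Quiver.Path.nil : Quiver.Path v v)) = 0 := by
  refine ext_inner_xi fun c d q => ?_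
  rw [inner_zero_right]
  by_cases hd : d = a
  · subst hd
    rw [adjoint_inner_right, hL.1]
    exact inner_xi_xi_of_ne fun h => by cases h
  · exact hL.inner_xi_adjoint_apply q hd _

theorem adjoint_apply_xi_cons (hL : IsCreationOperator e L) {c : V} (q : Quiver.Path c a) :
    adjoint L (xi V (q.cons e)) = xi V q := by
  refine ext_inner_xi fun c' d q' => ?_
  by_cases hd : d = a
  · subst hd
    rw [adjoint_inner_right, hL.1, inner_xi_cons_xi_cons]
  · rw [hL.inner_xi_adjoint_apply q' hd, inner_xi_xi_of_ne fun h => hd (by cases h; rfl)]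

theorem adjoint_apply_xi_cons_of_ne (hL : IsCreationOperator e L) {c : V} (q : Quiver.Path c a)
    {e' : a ⟶ b} (he : e ≠ e') : adjoint L (xi V (q.cons e')) = 0 := by
  refine ext_inner_xi fun c' d q' => ?_
  rw [inner_zero_right]
  by_cases hd : d = a
  · subst hd
    rw [adjoint_inner_right, hL.1, inner_xi_cons_xi_cons_of_ne _ _ he]
  · exact hL.inner_xi_adjoint_apply q' hd _

end IsCreationOperator

def spanXiEndingAt (V : Type) [Quiver.{1} V] (v : V) : Submodule ℂ (QH V) :=
  Submodule.span ℂ {x | ∃ (c : V) (q : Quiver.Path c v), x = xi V q}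

section

open ContinuousLinearMap

variable {V : Type} [Quiver.{1} V] {a b : V} {ι : Type*} [Fintype ι] {e : ι → (a ⟶ b)}
  {L : ι → (QH V →L[ℂ] QH V)}

theorem sum_apply_mem_spanXiEndingAt (hL : ∀ i, IsCreationOperator (e i) (L i)) {x : QH V}
    (hx : x ∈ spanXiEndingAt V a) : (∑ i, L i) x ∈ spanXiEndingAt V b := by
  induction hx using Submodule.span_induction with
  | mem x hx =>
    obtain ⟨c, q, rfl⟩ := hx
    rw [sum_apply]
    exact Submodule.sum_mem _ fun i _ => (hL i).1 c q ▸ Submodule.subset_span ⟨c, _, rfl⟩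
  | zero => rw [map_zero]; exact zero_mem _
  | add x y _ _ hx hy => rw [map_add]; exact add_mem hx hy
  | smul r x _ hx => rw [map_smul]; exact Submodule.smul_mem _ r hx

theorem adjoint_sum_apply_sum_apply (he : Function.Injective e)
    (hL : ∀ i, IsCreationOperator (e i) (L i)) {x : QH V} (hx : x ∈ spanXiEndingAt V a) :
    adjoint (∑ i, L i) ((∑ i, L i) x) = Fintype.card ι • x := by
  have hterm : ∀ {c : V} (q : Quiver.Path c a) (i : ι),
      ∑ j, adjoint (L i) (xi V (q.cons (e j))) = xi V q := fun q i =>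
    (Finset.sum_eq_single i (fun j _ hji => (hL i).adjoint_apply_xi_cons_of_ne q (he.ne hji.symm))
      (by simp)).trans ((hL i).adjoint_apply_xi_cons q)
  refine LinearMap.eqOn_span' (f := ((adjoint (∑ i, L i)).comp (∑ i, L i) : QH V →L[ℂ] QH V))
    (g := Fintype.card ι • LinearMap.id) ?_ hx
  rintro _ ⟨c, q, rfl⟩
  simp only [coe_comp, Function.comp_apply, LinearMap.smul_apply, LinearMap.id_apply, coe_coe,
    map_sum, sum_apply, (hL _).1]
  rw [Finset.sum_comm]
  simp only [hterm, Finset.sum_const, Finset.card_univ]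

end

theorem quiver_generating_operator_moments_general (V : Type) [Quiver.{1} V]
    (N : ℕ) (v₀ : V) (l : Fin N → (v₀ ⟶ v₀)) (hl : Function.Injective l)
    (Lop : Fin N → (QH V →L[ℂ] QH V))
    (hLop : ∀ (j : Fin N) (c : V) (q : Quiver.Path c v₀),
      Lop j (xi V q) = xi V (q.comp (l j).toPath))
    (hLop' : ∀ (j : Fin N) (c d : V) (q : Quiver.Path c d), d ≠ v₀ → Lop j (xi V q) = 0)
    (n : ℕ) :
    (inner ℂ
        (((∑ j : Fin N, (Lop j + ContinuousLinearMap.adjoint (Lop j))) ^ n)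
          (xi V (Quiver.Path.nil : Quiver.Path v₀ v₀)))
        (xi V (Quiver.Path.nil : Quiver.Path v₀ v₀)) : ℂ) =
      if n % 2 = 0 then (catalan (n / 2) : ℂ) * (N : ℂ) ^ (n / 2) else 0 := by
  set ξ := xi V (Quiver.Path.nil : Quiver.Path v₀ v₀)
  set P := ∑ j, Lop j
  have hL : ∀ j, IsCreationOperator (l j) (Lop j) := fun j => ⟨hLop j, hLop' j⟩
  have hT : ∑ j, (Lop j + ContinuousLinearMap.adjoint (Lop j)) =
      P + ContinuousLinearMap.adjoint P := by
    rw [Finset.sum_add_distrib, map_sum]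
  have hvac : ContinuousLinearMap.adjoint P ξ = 0 := by
    simp [P, ξ, map_sum, (hL _).adjoint_apply_xi_nil]
  have hmem : ∀ k, (P ^ k) ξ ∈ spanXiEndingAt V v₀ := by
    intro k
    induction k with
    | zero => exact Submodule.subset_span ⟨v₀, _, rfl⟩
    | succ k ih => rw [pow_succ']; exact sum_apply_mem_spanXiEndingAt hL ih
  have hiso : ∀ k, ContinuousLinearMap.adjoint P (P ((P ^ k) ξ)) = N • (P ^ k) ξ := fun k => by
    simpa only [Fintype.card_fin] using adjoint_sum_apply_sum_apply hl hL (hmem k)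
  rw [hT, inner_pow_add_adjoint_apply_self P ξ N hvac hiso, inner_xi_self,
    weightedWalkCount.eq_catalan]
  split_ifs <;> simp

/-- For `N` pairwise distinct loops `l₁, …, l_N` at a vertex `v₀`, the generating operator
`T = Σ_j (L_{l_j} + L_{l_j}*)` has vacuum moments `⟨T^n ξ_{v₀}, ξ_{v₀}⟩ = catalan(n/2)·N^{n/2}`
for even `n`, and `0` for odd `n`. -/
theorem quiver_generating_operator_moments (V : Type) [Quiver.{1} V]
    (N : ℕ) (hN : 0 < N) (v₀ : V) (l : Fin N → (v₀ ⟶ v₀)) (hl : Function.Injective l)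
    (Lop : Fin N → (QH V →L[ℂ] QH V))
    (hLop : ∀ (j : Fin N) (c : V) (q : Quiver.Path c v₀),
      Lop j (xi V q) = xi V (q.comp (l j).toPath))
    (hLop' : ∀ (j : Fin N) (c d : V) (q : Quiver.Path c d), d ≠ v₀ → Lop j (xi V q) = 0)
    (n : ℕ) :
    (inner ℂ
        (((∑ j : Fin N, (Lop j + ContinuousLinearMap.adjoint (Lop j))) ^ n)
          (xi V (Quiver.Path.nil : Quiver.Path v₀ v₀)))
        (xi V (Quiver.Path.nil : Quiver.Path v₀ v₀)) : ℂ) =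
      if n % 2 = 0 then (catalan (n / 2) : ℂ) * (N : ℂ) ^ (n / 2) else 0 :=
  quiver_generating_operator_moments_general V N v₀ l hl Lop hLop hLop' n
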